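/- Let G be a simple graph of order n with girth exactly 4. Then PC(G) = n if and only if G is a complete bipartite graph. -/

import Mathlib

/-!
A partition of `V` into `n = |V|` parts is the partition into singletons, and two singletons
`{u}`, `{v}` form a paired coalition exactly when `uv` is an edge whose ends dominate `G`. So
`PC(G) = n` iff every vertex lies on a dominating edge. Every edge of a complete bipartite
graph is dominating. Conversely, girth `4` makes `G` triangle-free, so a dominating edge `uv`
splits `V` into `N(u) ⊔ N(v)`, two independent sets; if `a ∈ N(v)` and `b ∈ N(u)`, the
dominating edge `aa'` at `a` has `a' ∈ N(u)`, so `b` is not adjacent to `a'` and must be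
adjacent to `a`.
-/

namespace PCPaper

variable {V : Type*}

/-- `S` is a dominating set of `G`. -/
def IsDomSet (G : SimpleGraph V) (S : Set V) : Prop :=
  ∀ v : V, v ∈ S ∨ ∃ u ∈ S, G.Adj u v

/-- `S` is a paired dominating set of `G`: a dominating set such that the subgraph of `G`
induced by `S` contains a perfect matching (a matching whose vertex set is exactly `S`). -/
def IsPairedDomSet (G : SimpleGraph V) (S : Set V) : Prop :=
  IsDomSet G S ∧ ∃ M : G.Subgraph, M.verts = S ∧ M.IsMatching

/-- Disjoint sets `A`, `B`, neither a paired dominating set, whose union is one. -/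
def PairedCoalition (G : SimpleGraph V) (A B : Set V) : Prop :=
  Disjoint A B ∧ ¬ IsPairedDomSet G A ∧ ¬ IsPairedDomSet G B ∧ IsPairedDomSet G (A ∪ B)

variable [Fintype V] [DecidableEq V]

/-- `π` is a paired coalition partition of `G`: no part is a paired dominating set and every
part forms a paired coalition with some other part. -/
def IsPCPartition (G : SimpleGraph V) (π : Finpartition (Finset.univ : Finset V)) : Prop :=
  ∀ A ∈ π.parts, ¬ IsPairedDomSet G (A : Set V) ∧
    ∃ B ∈ π.parts, B ≠ A ∧ PairedCoalition G (A : Set V) (B : Set V)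

/-- The paired coalition number: the maximum number of parts of a pc-partition of `G`,
and `0` if `G` admits no pc-partition. -/
noncomputable def pcNumber (G : SimpleGraph V) : ℕ :=
  sSup {k | ∃ π : Finpartition (Finset.univ : Finset V), IsPCPartition G π ∧ π.parts.card = k}

/-- The paired coalition graph of a partition `π` of `G`: vertices are the parts of `π`,
two parts being adjacent iff they form a paired coalition in `G`. -/
def PCG (G : SimpleGraph V) (π : Finpartition (Finset.univ : Finset V)) :
    SimpleGraph {A : Finset V // A ∈ π.parts} where
  Adj A B := PairedCoalition G ((A : Finset V) : Set V) ((B : Finset V) : Set V)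
  symm := by
    constructor
    rintro A B ⟨h1, h2, h3, h4⟩
    exact ⟨h1.symm, h3, h2, by rwa [Set.union_comm]⟩
  loopless := by
    constructor
    rintro A ⟨h1, h2, h3, h4⟩
    exact h2 (by rwa [Set.union_self] at h4)

end PCPaper

namespace PCPaper

/-- `G` is a complete bipartite graph: its vertex set splits into two nonempty
independent sets with all edges between them. -/
def IsCompleteBipartite {V : Type*} (G : SimpleGraph V) : Prop :=
  ∃ s : Set V, s.Nonempty ∧ sᶜ.Nonempty ∧
    ∀ u v : V, G.Adj u v ↔ ((u ∈ s ∧ v ∉ s) ∨ (u ∉ s ∧ v ∈ s))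

end PCPaper

open Finset SimpleGraph

namespace Finpartition

variable {α : Type*} [DecidableEq α] {s : Finset α}

lemma card_eq_one_of_card_parts_eq_card {P : Finpartition s} (h : #P.parts = #s)
    {t : Finset α} (ht : t ∈ P.parts) : #t = 1 := by
  have hpos : ∀ t ∈ P.parts, 1 ≤ #t := fun t ht ↦ card_pos.2 (P.nonempty_of_mem_parts ht)
  by_contra hne
  have : #P.parts < ∑ t ∈ P.parts, #t := by
    rw [card_eq_sum_ones]
    exact sum_lt_sum hpos ⟨t, ht, lt_of_le_of_ne (hpos t ht) (Ne.symm hne)⟩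
  rw [P.sum_card_parts] at this
  omega

lemma eq_bot_of_card_parts_eq_card {P : Finpartition s} (h : #P.parts = #s) : P = ⊥ := by
  ext t
  rw [mem_bot_iff]
  constructor
  · intro ht
    obtain ⟨a, rfl⟩ := card_eq_one.1 (card_eq_one_of_card_parts_eq_card h ht)
    exact ⟨a, P.le ht (mem_singleton_self a), rfl⟩
  · rintro ⟨a, ha, rfl⟩
    obtain ⟨t, ht, hat⟩ := P.exists_mem ha
    obtain ⟨b, rfl⟩ := card_eq_one.1 (card_eq_one_of_card_parts_eq_card h ht)
    rwa [mem_singleton.1 hat]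

end Finpartition

namespace SimpleGraph

variable {V : Type*} {G : SimpleGraph V}

lemma CliqueFree.not_adj_of_adj_of_adj (hG : G.CliqueFree 3) {a b c : V} (hab : G.Adj a b)
    (hac : G.Adj a c) : ¬ G.Adj b c := fun hbc ↦
  isIndepSet_neighborSet_of_triangleFree G hG a hab hac hbc.ne hbc

lemma cliqueFree_three_of_three_lt_girth (h : 3 < G.girth) : G.CliqueFree 3 := by
  by_contra hG
  have htop : (completeGraph (Fin 3)).girth = 3 := girth_top (by simp)
  have hcyc : ¬ (completeGraph (Fin 3)).IsAcyclic := by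
    rw [← girth_eq_zero, htop]
    decide
  have := ((not_cliqueFree_iff_top_isContained 3).1 hG).girth_le hcyc
  omega

lemma nonempty_of_girth_ne_zero (h : G.girth ≠ 0) : Nonempty V := by
  obtain ⟨a, -⟩ := exists_girth_eq_length.2 (mt girth_eq_zero.2 h)
  exact ⟨a⟩

end SimpleGraph

namespace PCPaper

section Graph

variable {V : Type*} {G : SimpleGraph V}

lemma not_isPairedDomSet_singleton (u : V) : ¬ IsPairedDomSet G {u} := by
  rintro ⟨-, M, hMv, hM⟩
  obtain ⟨w, hw, -⟩ := hM (show u ∈ M.verts by rw [hMv]; rfl)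
  have hwu : w = u := by simpa [hMv] using M.edge_vert hw.symm
  exact (M.adj_sub hw).ne hwu.symm

lemma isPairedDomSet_pair_iff {u v : V} :
    IsPairedDomSet G {u, v} ↔ G.Adj u v ∧ IsDomSet G {u, v} := by
  refine ⟨fun h ↦ ⟨?_, h.1⟩, fun ⟨huv, hd⟩ ↦ ?_⟩
  · obtain ⟨-, M, hMv, hM⟩ := h
    obtain ⟨w, hw, -⟩ := hM (show u ∈ M.verts by simp [hMv])
    have hw' : w = u ∨ w = v := by simpa [hMv] using M.edge_vert hw.symm
    rcases hw' with rfl | rfl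
    · exact absurd (M.adj_sub hw) (G.loopless.irrefl w)
    · exact M.adj_sub hw
  · exact ⟨hd, G.subgraphOfAdj huv, by simp, .subgraphOfAdj huv⟩

lemma pairedCoalition_singleton_iff {u v : V} :
    PairedCoalition G {u} {v} ↔ G.Adj u v ∧ IsDomSet G {u, v} := by
  rw [PairedCoalition, Set.singleton_union, isPairedDomSet_pair_iff]
  refine ⟨fun h ↦ h.2.2.2, fun h ↦ ⟨?_, not_isPairedDomSet_singleton u,
    not_isPairedDomSet_singleton v, h⟩⟩
  exact Set.disjoint_singleton.2 h.1.ne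

lemma adj_iff_not_adj_of_isDomSet_pair (hG : G.CliqueFree 3) {u v : V} (huv : G.Adj u v)
    (hd : IsDomSet G {u, v}) (x : V) : G.Adj u x ↔ ¬ G.Adj v x := by
  refine ⟨fun hux hvx ↦ hG.not_adj_of_adj_of_adj huv hux hvx, fun hvx ↦ ?_⟩
  rcases hd x with hx | ⟨w, hw, hwx⟩
  · rcases hx with rfl | rfl
    · exact absurd huv.symm hvx
    · exact huv
  · rcases hw with rfl | rfl
    · exact hwx
    · exact absurd hwx hvx

lemma IsCompleteBipartite.exists_adj_isDomSet_pair (h : IsCompleteBipartite G) (u : V) :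
    ∃ v, G.Adj u v ∧ IsDomSet G {u, v} := by
  obtain ⟨s, ⟨a, ha⟩, ⟨b, hb⟩, hadj⟩ := h
  have hadj' : ∀ x y, G.Adj x y ↔ ¬ (x ∈ s ↔ y ∈ s) := fun x y ↦ by rw [hadj]; tauto
  obtain ⟨v, huv⟩ : ∃ v, ¬ (u ∈ s ↔ v ∈ s) := by
    by_cases hu : u ∈ s
    · exact ⟨b, by simp_all⟩
    · exact ⟨a, by simp_all⟩
  refine ⟨v, (hadj' u v).2 huv, fun x ↦ .inr ?_⟩
  by_cases hx : x ∈ s ↔ u ∈ s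
  · exact ⟨v, by simp, (hadj' v x).2 (by tauto)⟩
  · exact ⟨u, by simp, (hadj' u x).2 (by tauto)⟩

lemma isCompleteBipartite_of_forall_exists_isDomSet_pair (hG : G.CliqueFree 3) [Nonempty V]
    (H : ∀ u, ∃ v, G.Adj u v ∧ IsDomSet G {u, v}) : IsCompleteBipartite G := by
  have tri := @hG.not_adj_of_adj_of_adj
  obtain ⟨u⟩ := ‹Nonempty V›
  obtain ⟨v, huv, hd⟩ := H u
  have hsplit := adj_iff_not_adj_of_isDomSet_pair hG huv hd
  have hcross : ∀ a b, G.Adj v a → ¬ G.Adj v b → G.Adj a b := fun a b ha hb ↦ by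
    obtain ⟨a', haa', hda⟩ := H a
    have hua' : G.Adj u a' := (hsplit a').2 fun hva' ↦ tri ha hva' haa'
    exact (adj_iff_not_adj_of_isDomSet_pair hG haa' hda b).2 (tri hua' ((hsplit b).2 hb))
  refine ⟨{x | G.Adj v x}, ⟨u, huv.symm⟩, ⟨v, G.loopless.irrefl v⟩, fun x y ↦ ?_⟩
  simp only [Set.mem_ofPred_eq]
  refine ⟨fun hxy ↦ ?_, ?_⟩
  · by_cases hx : G.Adj v x <;> by_cases hy : G.Adj v y
    · exact absurd hxy (tri hx hy)
    · exact .inl ⟨hx, hy⟩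
    · exact .inr ⟨hx, hy⟩
    · exact absurd hxy (tri ((hsplit x).2 hx) ((hsplit y).2 hy))
  · rintro (⟨hx, hy⟩ | ⟨hx, hy⟩)
    · exact hcross x y hx hy
    · exact (hcross y x hy hx).symm

lemma isCompleteBipartite_iff_forall_exists_isDomSet_pair (hG : G.CliqueFree 3)
    [Nonempty V] :
    IsCompleteBipartite G ↔ ∀ u, ∃ v, G.Adj u v ∧ IsDomSet G {u, v} :=
  ⟨IsCompleteBipartite.exists_adj_isDomSet_pair,
    isCompleteBipartite_of_forall_exists_isDomSet_pair hG⟩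

end Graph

variable {V : Type*} [Fintype V] [DecidableEq V] {G : SimpleGraph V}

lemma isPCPartition_bot_iff :
    IsPCPartition G ⊥ ↔ ∀ u, ∃ v, G.Adj u v ∧ IsDomSet G {u, v} := by
  simp only [IsPCPartition, Finpartition.mem_bot_iff, mem_univ, true_and]
  constructor
  · intro H u
    obtain ⟨-, B, ⟨v, rfl⟩, -, hc⟩ := H {u} ⟨u, rfl⟩
    exact ⟨v, by simpa [pairedCoalition_singleton_iff] using hc⟩
  · rintro H A ⟨u, rfl⟩
    obtain ⟨v, huv⟩ := H u
    refine ⟨by simpa using not_isPairedDomSet_singleton u, {v}, ⟨v, rfl⟩,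
      by simpa using huv.1.ne', by simpa [pairedCoalition_singleton_iff] using huv⟩

lemma pcNumber_eq_card_iff [Nonempty V] :
    pcNumber G = Fintype.card V ↔ IsPCPartition G ⊥ := by
  set S := {k | ∃ π : Finpartition (univ : Finset V), IsPCPartition G π ∧ #π.parts = k}
  have hle : ∀ k ∈ S, k ≤ Fintype.card V := by
    rintro k ⟨π, -, rfl⟩
    exact π.card_parts_le_card
  have hbot : #(⊥ : Finpartition (univ : Finset V)).parts = Fintype.card V :=
    Finpartition.card_bot _
  change sSup S = _ ↔ _
  constructor
  · intro h
    have hS : S.Nonempty := by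
      by_contra hS
      rw [Set.not_nonempty_iff_eq_empty.1 hS, csSup_empty] at h
      exact Fintype.card_ne_zero h.symm
    obtain ⟨π, hπ, hcard⟩ := h ▸ Nat.sSup_mem hS ⟨_, hle⟩
    rwa [← Finpartition.eq_bot_of_card_parts_eq_card hcard]
  · intro h
    have hmem : Fintype.card V ∈ S := ⟨⊥, h, hbot⟩
    exact le_antisymm (csSup_le ⟨_, hmem⟩ hle) (le_csSup ⟨_, hle⟩ hmem)

end PCPaper

open PCPaper in
/-- For a graph `G` of order `n` with girth exactly `4`, `PC(G) = n` iff `G` is a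
complete bipartite graph. -/
theorem stmt_17 {V : Type*} [Fintype V] [DecidableEq V] (G : SimpleGraph V)
    (hg : G.girth = 4) :
    pcNumber G = Fintype.card V ↔ IsCompleteBipartite G := by
  have := nonempty_of_girth_ne_zero (G := G) (by omega)
  rw [pcNumber_eq_card_iff, isPCPartition_bot_iff,
    isCompleteBipartite_iff_forall_exists_isDomSet_pair
      (cliqueFree_three_of_three_lt_girth (by omega))]
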